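/- arXiv:1803.02899 — 6 statements merged into one kernel-verified Lean document; each statement's English description precedes it below -/
import Mathlib

section
/- A function α in the Möbius algebra M(C) of a finite category C satisfies e_C α e_C = α if and only if α is invariant under isomorphisms, i.e., α(x,y) = α(x',y') whenever x ≅ x' and y ≅ y' in C. -/
open CategoryTheory
open scoped Classical

universe u v

/-- Convolution product on the Möbius algebra of rational-valued functions
on pairs of objects of a finite category. -/
noncomputable def conv (C : Type u) [Category.{v} C] [Fintype C]
    (α β : C → C → ℚ) : C → C → ℚ :=
  fun x y => ∑ z : C, α x z * β z y

/-- The size of the isomorphism class of an object. -/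
noncomputable def isoCard (C : Type u) [Category.{v} C] [Fintype C] (x : C) : ℚ :=
  ((Finset.univ.filter fun z : C => Nonempty (x ≅ z)).card : ℚ)

/-- The idempotent `e_C` : `e_C(x,y) = 1/|[x]|` if `x ≅ y`, and `0` otherwise. -/
noncomputable def eFun (C : Type u) [Category.{v} C] [Fintype C] : C → C → ℚ :=
  fun x y => if Nonempty (x ≅ y) then 1 / isoCard C x else 0

/-- The zeta function of a finite category: `ζ_C(x,y) = |C(x,y)|`. -/
noncomputable def zeta (C : Type u) [Category.{v} C] [Fintype C]
    [∀ x y : C, Fintype (x ⟶ y)] : C → C → ℚ :=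
  fun x y => (Fintype.card (x ⟶ y) : ℚ)

/-- The Kronecker delta, the multiplicative identity of the Möbius algebra. -/
noncomputable def delta (C : Type u) [Category.{v} C] [Fintype C] : C → C → ℚ :=
  fun x y => if x = y then 1 else 0

/- Conjugating by `e_C` averages a function over the isomorphism classes of its two arguments:
`(e_C α e_C)(x,y)` is the mean of `α` over `[x] × [y]`. Such an average is iso-invariant, and it
returns `α` itself when `α` is already constant on each `[x] × [y]`. -/

section MoebiusAlgebra

variable {C : Type u} [Category.{v} C]

lemma nonempty_iso_congr_left {x x' : C} (h : Nonempty (x ≅ x')) (z : C) :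
    Nonempty (x ≅ z) ↔ Nonempty (x' ≅ z) :=
  ⟨fun ⟨i⟩ => ⟨h.some.symm ≪≫ i⟩, fun ⟨i⟩ => ⟨h.some ≪≫ i⟩⟩

lemma nonempty_iso_congr_right {y y' : C} (h : Nonempty (y ≅ y')) (w : C) :
    Nonempty (w ≅ y) ↔ Nonempty (w ≅ y') :=
  ⟨fun ⟨i⟩ => ⟨i ≪≫ h.some⟩, fun ⟨i⟩ => ⟨i ≪≫ h.some.symm⟩⟩

variable [Fintype C]

lemma isoCard_congr {x x' : C} (h : Nonempty (x ≅ x')) : isoCard C x = isoCard C x' := by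
  unfold isoCard
  congr 2
  exact Finset.filter_congr fun z _ => nonempty_iso_congr_left h z

lemma isoCard_pos (x : C) : 0 < isoCard C x := by
  unfold isoCard
  exact_mod_cast Finset.card_pos.mpr ⟨x, by simpa using ⟨Iso.refl x⟩⟩

lemma eFun_congr_left {x x' : C} (h : Nonempty (x ≅ x')) (z : C) :
    eFun C x z = eFun C x' z := by
  simp only [eFun, isoCard_congr h, nonempty_iso_congr_left h z]

lemma eFun_congr_right {y y' : C} (h : Nonempty (y ≅ y')) (w : C) :
    eFun C w y = eFun C w y' := by
  simp only [eFun, nonempty_iso_congr_right h w]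

/-- The rows of `e_C` are uniform probability distributions on isomorphism classes. -/
lemma sum_eFun_mul_of_iso_invariant (x : C) (f : C → ℚ)
    (hf : ∀ z, Nonempty (x ≅ z) → f z = f x) :
    ∑ z : C, eFun C x z * f z = f x := by
  have hsupp : ∀ z, eFun C x z * f z = if Nonempty (x ≅ z) then f x / isoCard C x else 0 := by
    intro z
    by_cases hz : Nonempty (x ≅ z)
    · rw [eFun, if_pos hz, if_pos hz, hf z hz, one_div_mul_eq_div]
    · rw [eFun, if_neg hz, if_neg hz, zero_mul]
  rw [Finset.sum_congr rfl fun z _ => hsupp z, Finset.sum_ite, Finset.sum_const_zero, add_zero,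
    Finset.sum_const, nsmul_eq_mul, ← isoCard, mul_div_cancel₀ _ (isoCard_pos x).ne']

lemma sum_mul_eFun_of_iso_invariant (y : C) (f : C → ℚ)
    (hf : ∀ w, Nonempty (w ≅ y) → f w = f y) :
    ∑ w : C, f w * eFun C w y = f y := by
  have hsym : ∀ w, eFun C w y = eFun C y w := by
    intro w
    by_cases hw : Nonempty (w ≅ y)
    · have hw' : Nonempty (y ≅ w) := ⟨hw.some.symm⟩
      rw [eFun, eFun, if_pos hw, if_pos hw', isoCard_congr hw]
    · have hw' : ¬Nonempty (y ≅ w) := fun ⟨i⟩ => hw ⟨i.symm⟩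
      rw [eFun, eFun, if_neg hw, if_neg hw']
  simp_rw [hsym, mul_comm (f _)]
  exact sum_eFun_mul_of_iso_invariant y f fun w hw => hf w ⟨hw.some.symm⟩

lemma conv_eFun_left_of_iso_invariant (β : C → C → ℚ)
    (hβ : ∀ x x' y, Nonempty (x ≅ x') → β x y = β x' y) :
    conv C (eFun C) β = β :=
  funext₂ fun x y => sum_eFun_mul_of_iso_invariant x (β · y) fun z hz => (hβ x z y hz).symm

lemma conv_eFun_right_of_iso_invariant (β : C → C → ℚ)
    (hβ : ∀ x y y', Nonempty (y ≅ y') → β x y = β x y') :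
    conv C β (eFun C) = β :=
  funext₂ fun x y => sum_mul_eFun_of_iso_invariant y (β x) fun w hw => hβ x w y hw

end MoebiusAlgebra

/-- `α ∈ M(C)` satisfies `e_C α e_C = α` iff `α` is invariant under
isomorphisms. -/
theorem corner_mem_iff_iso_invariant (C : Type u) [Category.{v} C] [Fintype C]
    [∀ x y : C, Fintype (x ⟶ y)] (α : C → C → ℚ) :
    conv C (eFun C) (conv C α (eFun C)) = α ↔
      ∀ x x' y y' : C, Nonempty (x ≅ x') → Nonempty (y ≅ y') → α x y = α x' y' := by
  constructor
  · rintro h x x' y y' hx hy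
    rw [← h]
    simp only [conv, eFun_congr_left hx, eFun_congr_right hy]
  · intro h
    have hright : conv C α (eFun C) = α :=
      conv_eFun_right_of_iso_invariant α fun x y y' hy => h x x y y' ⟨Iso.refl x⟩ hy
    rw [hright]
    exact conv_eFun_left_of_iso_invariant α fun x x' y hx => h x x' y y hx ⟨Iso.refl y⟩
end

section
/- A finite skeletal EI-category has Möbius inversion: its zeta function is invertible in the convolution algebra M(C). In particular, the preorder on objects given by x ≤ y iff C(x,y) ≠ ∅ is a partial order, and ζ_C is upper triangular with nonzero diagonal with respect to any linear extension. -/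
open CategoryTheory
open scoped Classical

universe u v

/-!
In an EI-category a pair of morphisms `f : x ⟶ y`, `g : y ⟶ x` makes `f` an
isomorphism (`f ≫ g` and `g ≫ f` are automorphisms), so in a skeletal EI-category the relation
`C(x,y) ≠ ∅` is a partial order. The zeta matrix vanishes off this order and has the positive
diagonal `|C(x,x)|`; ordering the objects by a linear extension makes it upper triangular, so its
determinant is the product of the diagonal, hence nonzero, and the inverse matrix is the Möbius
function.
-/

theorem Matrix.det_eq_prod_diag_of_apply_ne_zero_le {ι R : Type*} [Fintype ι] [DecidableEq ι]
    [PartialOrder ι] [CommRing R] (M : Matrix ι ι R) (hM : ∀ i j, M i j ≠ 0 → i ≤ j) :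
    M.det = ∏ i, M i i := by
  let : Fintype (LinearExtension ι) := ‹Fintype ι›
  let : DecidableEq (LinearExtension ι) := ‹DecidableEq ι›
  -- `LinearExtension ι` is a type synonym of `ι`: `M'` is `M` indexed by a linear extension.
  let M' : Matrix (LinearExtension ι) (LinearExtension ι) R := M
  have hupper : M'.IsUpperTriangular := fun i j hji => by
    by_contra hij
    exact (toLinearExtension.monotone (hM i j hij)).not_gt hji
  exact (M'.det_of_isUpperTriangular hupper :)

section EI

variable {C : Type u} [Category.{v} C]

theorem isIso_of_EI (hEI : ∀ (x : C) (f : x ⟶ x), IsIso f) {x y : C} (f : x ⟶ y) (g : y ⟶ x) :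
    IsIso f := by
  have := hEI x (f ≫ g)
  have := hEI y (g ≫ f)
  have : IsSplitMono f :=
    IsSplitMono.mk' ⟨g ≫ inv (f ≫ g), by rw [← Category.assoc, IsIso.hom_inv_id]⟩
  have : IsSplitEpi f :=
    IsSplitEpi.mk' ⟨inv (g ≫ f) ≫ g, by rw [Category.assoc, IsIso.inv_hom_id]⟩
  exact isIso_of_mono_of_isSplitEpi f

theorem eq_of_hom_of_hom (hskel : ∀ x y : C, (x ≅ y) → x = y)
    (hEI : ∀ (x : C) (f : x ⟶ x), IsIso f) (x y : C) :
    Nonempty (x ⟶ y) → Nonempty (y ⟶ x) → x = y := by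
  rintro ⟨f⟩ ⟨g⟩
  have := isIso_of_EI hEI f g
  exact hskel x y (asIso f)

abbrev homPartialOrder (hanti : ∀ x y : C, Nonempty (x ⟶ y) → Nonempty (y ⟶ x) → x = y) :
    PartialOrder C where
  le x y := Nonempty (x ⟶ y)
  le_refl x := ⟨𝟙 x⟩
  le_trans _ _ _ := fun ⟨f⟩ ⟨g⟩ => ⟨f ≫ g⟩
  le_antisymm := hanti

end EI

section MobiusAlgebra

variable {C : Type u} [Category.{v} C] [Fintype C]

theorem of_conv_eq_mul (α β : C → C → ℚ) :
    Matrix.of (conv C α β) = Matrix.of α * Matrix.of β := by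
  ext x y
  simp [conv, Matrix.mul_apply]

theorem of_delta_eq_one : Matrix.of (delta C) = 1 := by
  ext x y
  simp [delta, Matrix.one_apply]

theorem exists_conv_inverse_of_det_ne_zero (α : C → C → ℚ) (hα : (Matrix.of α).det ≠ 0) :
    ∃ μ : C → C → ℚ, conv C α μ = delta C ∧ conv C μ α = delta C := by
  have hunit : IsUnit (Matrix.of α).det := isUnit_iff_ne_zero.2 hα
  refine ⟨Matrix.of.symm (Matrix.of α)⁻¹, Matrix.of.injective ?_, Matrix.of.injective ?_⟩
  · rw [of_conv_eq_mul, of_delta_eq_one, Equiv.apply_symm_apply]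
    exact Matrix.mul_nonsing_inv _ hunit
  · rw [of_conv_eq_mul, of_delta_eq_one, Equiv.apply_symm_apply]
    exact Matrix.nonsing_inv_mul _ hunit

variable [∀ x y : C, Fintype (x ⟶ y)]

theorem zeta_ne_zero_iff {x y : C} : zeta C x y ≠ 0 ↔ Nonempty (x ⟶ y) := by
  simp [zeta, Fintype.card_eq_zero_iff]

theorem zeta_self_ne_zero (x : C) : zeta C x x ≠ 0 :=
  zeta_ne_zero_iff.2 ⟨𝟙 x⟩

end MobiusAlgebra

/-- a finite skeletal EI-category has Möbius inversion: its zeta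
function is invertible in the convolution algebra `M(C)`.  In particular the
preorder `x ≤ y ↔ C(x,y) ≠ ∅` is a partial order (it is antisymmetric). -/
theorem skeletal_ei_has_mobius (C : Type u) [Category.{v} C] [Fintype C]
    [∀ x y : C, Fintype (x ⟶ y)]
    (hskel : ∀ x y : C, (x ≅ y) → x = y)
    (hEI : ∀ (x : C) (f : x ⟶ x), IsIso f) :
    (∃ μ : C → C → ℚ, conv C (zeta C) μ = delta C ∧ conv C μ (zeta C) = delta C) ∧
    (∀ x y : C, Nonempty (x ⟶ y) → Nonempty (y ⟶ x) → x = y) := by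
  have hanti := eq_of_hom_of_hom hskel hEI
  let := homPartialOrder hanti
  refine ⟨exists_conv_inverse_of_det_ne_zero _ ?_, hanti⟩
  rw [Matrix.det_eq_prod_diag_of_apply_ne_zero_le _ fun x y => zeta_ne_zero_iff.1]
  exact Finset.prod_ne_zero_iff.2 fun x _ => zeta_self_ne_zero x
end

section
/- Suppose a finite category C has elements α, β in M(C) with ζ_C β = e_C and α ζ_C = e_C. Then the function β·𝟙 (where 𝟙 is the constant function 1 on objects and the action is matrix-vector multiplication) is a weighting on C, i.e., ζ_C (β𝟙) = 𝟙, and 𝟙·α is a coweighting on C. -/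
open CategoryTheory
open scoped Classical

universe u v

section

variable {C : Type u} [Category.{v} C] [Fintype C]

theorem isoCard_eq_of_iso {x y : C} (h : Nonempty (x ≅ y)) : isoCard C x = isoCard C y := by
  obtain ⟨i⟩ := h
  unfold isoCard
  congr 2
  ext z
  simp only [Finset.mem_filter, Finset.mem_univ, true_and]
  exact ⟨fun ⟨j⟩ => ⟨i.symm ≪≫ j⟩, fun ⟨j⟩ => ⟨i ≪≫ j⟩⟩

theorem isoCard_ne_zero (x : C) : isoCard C x ≠ 0 := by
  unfold isoCard
  have hx : x ∈ Finset.univ.filter fun z : C => Nonempty (x ≅ z) := by simpa using ⟨Iso.refl x⟩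
  exact Nat.cast_ne_zero.mpr (Finset.card_ne_zero_of_mem hx)

theorem eFun_comm (x y : C) : eFun C x y = eFun C y x := by
  have hiff : Nonempty (x ≅ y) ↔ Nonempty (y ≅ x) := ⟨fun ⟨i⟩ => ⟨i.symm⟩, fun ⟨i⟩ => ⟨i.symm⟩⟩
  by_cases h : Nonempty (x ≅ y)
  · simp only [eFun, if_pos h, if_pos (hiff.mp h), isoCard_eq_of_iso h]
  · simp only [eFun, if_neg h, if_neg (mt hiff.mpr h)]

theorem sum_eFun_right (x : C) : ∑ z, eFun C x z = 1 := by
  simp only [eFun, Finset.sum_ite, Finset.sum_const_zero, add_zero, Finset.sum_const,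
    nsmul_eq_mul]
  exact mul_one_div_cancel (isoCard_ne_zero x)

theorem sum_eFun_left (y : C) : ∑ x, eFun C x y = 1 := by
  simp_rw [eFun_comm _ y]
  exact sum_eFun_right y

theorem sum_conv_right (A B : C → C → ℚ) (x : C) :
    ∑ y, conv C A B x y = ∑ z, A x z * ∑ y, B z y := by
  simp only [conv, Finset.mul_sum]
  exact Finset.sum_comm

theorem sum_conv_left (A B : C → C → ℚ) (y : C) :
    ∑ x, conv C A B x y = ∑ z, (∑ x, A x z) * B z y := by
  simp only [conv, Finset.sum_mul]
  exact Finset.sum_comm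

end

/-- if `ζ_C β = e_C` and `α ζ_C = e_C`, then `β·𝟙` is a weighting
on `C` and `𝟙·α` is a coweighting on `C`. -/
theorem weighting_of_onesided_inverses (C : Type u) [Category.{v} C] [Fintype C]
    [∀ x y : C, Fintype (x ⟶ y)] (α β : C → C → ℚ)
    (hβ : conv C (zeta C) β = eFun C) (hα : conv C α (zeta C) = eFun C) :
    (∀ x : C, ∑ y : C, zeta C x y * (∑ z : C, β y z) = 1) ∧
    (∀ y : C, ∑ x : C, (∑ z : C, α z x) * zeta C x y = 1) := by
  refine ⟨fun x => ?_, fun y => ?_⟩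
  · rw [← sum_conv_right, hβ, sum_eFun_right]
  · rw [← sum_conv_left, hα, sum_eFun_left]
end

section
/- Let C be a finite category, k : Obj(C) → Q a weighting on C, and F : C → Cat a functor such that the Grothendieck construction ∫F and each F(x) have Euler characteristics. Then χ(∫F) = Σ_{x ∈ Obj(C)} k(x) · χ(F(x)). -/
/-!
If `k` weights `C` and `kf x` weights each fibre `F.obj x`, then `p ↦ k p.base * kf p.base p.fiber`
weights `∫F`: a morphism of `∫F` out of `(x, a)` is a morphism `α : x ⟶ y` of `C` together with a
morphism of `F.obj y` out of `(F.map α).obj a`, so summing first over the fibre and then over `C`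
uses the two weighting equations in turn. Since `∫F` also has a coweighting, all weightings of `∫F`
have the same total mass, and the mass of this one is `∑ x, k x * ∑ a, kf x a`.
-/

open CategoryTheory
open scoped Classical

universe u v w

/-- Zeta function of a category, via `Nat.card` of hom-sets. -/
noncomputable def zetaN (D : Type u) [Category.{v} D] : D → D → ℚ :=
  fun x y => (Nat.card (x ⟶ y) : ℚ)

/-- A weighting on a category: `Σ_y |D(x,y)| k(y) = 1` for all objects `x`. -/
def WeightingN (D : Type u) [Category.{v} D] (k : D → ℚ) : Prop :=
  ∀ x : D, ∑ᶠ y : D, zetaN D x y * k y = 1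

/-- A coweighting on a category: `Σ_x k(x) |D(x,y)| = 1` for all objects `y`. -/
def CoweightingN (D : Type u) [Category.{v} D] (k : D → ℚ) : Prop :=
  ∀ y : D, ∑ᶠ x : D, k x * zetaN D x y = 1

section Weighting

variable {D : Type u} [Category.{v} D] [Finite D]

theorem WeightingN.finsum_eq_of_coweightingN {w c : D → ℚ} (hw : WeightingN D w)
    (hc : CoweightingN D c) : ∑ᶠ x, w x = ∑ᶠ x, c x := by
  have := Fintype.ofFinite D
  simp only [WeightingN, CoweightingN, finsum_eq_sum_of_fintype] at hw hc ⊢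
  calc ∑ y, w y = ∑ y, (∑ x, c x * zetaN D x y) * w y := by simp only [hc, one_mul]
    _ = ∑ x, c x * ∑ y, zetaN D x y * w y := by
      simp only [Finset.sum_mul, Finset.mul_sum, mul_assoc]
      exact Finset.sum_comm
    _ = ∑ x, c x := by simp only [hw, mul_one]

theorem WeightingN.finsum_eq_finsum {w w' : D → ℚ} (hw : WeightingN D w)
    (hw' : WeightingN D w') {c : D → ℚ} (hc : CoweightingN D c) :
    ∑ᶠ x, w x = ∑ᶠ x, w' x := by
  rw [hw.finsum_eq_of_coweightingN hc, hw'.finsum_eq_of_coweightingN hc]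

end Weighting

namespace CategoryTheory.Grothendieck

variable {C : Type u} [Category.{v} C] (F : C ⥤ Cat.{v, u})

def equivSigma : Grothendieck F ≃ Σ x : C, F.obj x where
  toFun p := ⟨p.base, p.fiber⟩
  invFun s := ⟨s.1, s.2⟩

def homEquivSigma (p q : Grothendieck F) :
    (p ⟶ q) ≃ Σ α : p.base ⟶ q.base, ((F.map α).toFunctor.obj p.fiber ⟶ q.fiber) where
  toFun f := ⟨f.base, f.fiber⟩
  invFun s := ⟨s.1, s.2⟩

instance finite [Finite C] [∀ x, Finite (F.obj x)] : Finite (Grothendieck F) :=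
  .of_equiv _ (equivSigma F).symm

theorem finsum_eq [Finite C] [∀ x, Finite (F.obj x)] {M : Type*} [AddCommMonoid M]
    (f : Grothendieck F → M) : ∑ᶠ p, f p = ∑ᶠ x : C, ∑ᶠ a : F.obj x, f ⟨x, a⟩ := by
  have := Fintype.ofFinite C
  have (x : C) := Fintype.ofFinite (F.obj x)
  have := Fintype.ofFinite (Grothendieck F)
  simp only [finsum_eq_sum_of_fintype]
  rw [← (equivSigma F).symm.sum_comp, Fintype.sum_sigma]
  rfl

variable [∀ x y : C, Finite (x ⟶ y)] [∀ (x : C) (a b : F.obj x), Finite (a ⟶ b)]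

instance finite_hom (p q : Grothendieck F) : Finite (p ⟶ q) :=
  .of_equiv _ (homEquivSigma F p q).symm

theorem zetaN_eq (p q : Grothendieck F) :
    zetaN (Grothendieck F) p q =
      ∑ᶠ α : p.base ⟶ q.base, zetaN (F.obj q.base) ((F.map α).toFunctor.obj p.fiber) q.fiber := by
  have := Fintype.ofFinite (p.base ⟶ q.base)
  simp only [zetaN, Nat.card_congr (homEquivSigma F p q), Nat.card_sigma, Nat.cast_sum,
    finsum_eq_sum_of_fintype]

end CategoryTheory.Grothendieck

open CategoryTheory.Grothendieck in
theorem WeightingN.grothendieck {C : Type u} [Category.{v} C] [Finite C]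
    [∀ x y : C, Finite (x ⟶ y)] (F : C ⥤ Cat.{v, u}) [∀ x, Finite (F.obj x)]
    [∀ (x : C) (a b : F.obj x), Finite (a ⟶ b)] {k : C → ℚ} (hk : WeightingN C k)
    {kf : ∀ x : C, F.obj x → ℚ} (hkf : ∀ x, WeightingN (F.obj x) (kf x)) :
    WeightingN (Grothendieck F) fun p => k p.base * kf p.base p.fiber := by
  intro p
  have (x : C) := Fintype.ofFinite (p.base ⟶ x)
  calc ∑ᶠ q : Grothendieck F, zetaN _ p q * (k q.base * kf q.base q.fiber)
      = ∑ᶠ (x : C) (α : p.base ⟶ x),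
          k x * ∑ᶠ a, zetaN (F.obj x) ((F.map α).toFunctor.obj p.fiber) a * kf x a := by
        have := Fintype.ofFinite C
        have (x : C) := Fintype.ofFinite (F.obj x)
        simp only [finsum_eq, zetaN_eq, finsum_eq_sum_of_fintype, Finset.sum_mul, Finset.mul_sum]
        refine Finset.sum_congr rfl fun x _ => ?_
        rw [Finset.sum_comm]
        exact Finset.sum_congr rfl fun α _ => Finset.sum_congr rfl fun a _ => by ring
    _ = ∑ᶠ (x : C) (_ : p.base ⟶ x), k x :=
        finsum_congr fun x => finsum_congr fun α => by rw [hkf x, mul_one]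
    _ = ∑ᶠ x, zetaN C p.base x * k x := by
        simp only [finsum_eq_sum_of_fintype, Finset.sum_const, Finset.card_univ, nsmul_eq_mul,
          zetaN, Nat.card_eq_fintype_card]
    _ = 1 := hk p.base

/-- Leinster: if `k` is a weighting on a finite category `C` and
`F : C ⥤ Cat` is a functor such that the Grothendieck construction `∫F` and
each `F(x)` have Euler characteristics (i.e. admit weightings and coweightings,
whose total sums are the Euler characteristics), then
`χ(∫F) = Σ_x k(x)·χ(F(x))`. -/
theorem euler_grothendieck (C : Type u) [Category.{v} C] [Finite C]
    [∀ x y : C, Finite (x ⟶ y)]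
    (F : C ⥤ Cat.{v, u})
    (hObj : ∀ x : C, Finite (F.obj x))
    (hHom : ∀ (x : C) (a b : F.obj x), Finite (a ⟶ b))
    (k : C → ℚ) (hk : WeightingN C k)
    (kG k'G : Grothendieck F → ℚ)
    (hkG : WeightingN (Grothendieck F) kG)
    (hk'G : CoweightingN (Grothendieck F) k'G)
    (kf k'f : ∀ x : C, F.obj x → ℚ)
    (hkf : ∀ x : C, WeightingN (F.obj x) (kf x))
    (hk'f : ∀ x : C, CoweightingN (F.obj x) (k'f x)) :
    ∑ᶠ p : Grothendieck F, kG p = ∑ᶠ x : C, k x * ∑ᶠ a : F.obj x, kf x a := by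
  rw [hkG.finsum_eq_finsum (hk.grothendieck F hkf) hk'G, Grothendieck.finsum_eq]
  simp only [mul_finsum]
end

section
/- Let G be a finite group and E the set of cyclic subgroups of G. Then in the rational representation ring Q ⊗ R(G) of complex characters, the trivial character satisfies 𝟙_G = Σ_{H ∈ E} (−μ_{E₊}(H,∞)/[G:H]) · Ind_H^G(𝟙_H), where E₊ is the poset of cyclic subgroups with an added maximum ∞ and μ its Möbius function. -/
/-!
Since `[G : H] * |H| = |G|`, the right-hand side equals
`|G|⁻¹ * ∑ x, ∑_{H ∋ x⁻¹gx} -χ̃(E_{>H})`, so it suffices that for every `y : G` the sum of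
`-χ̃(E_{>H})` over the cyclic `H ∋ y` is `1`. These `H` form the poset `E_{≥⟨y⟩}`, which has a
least element. In any finite poset `P`, sorting chains by their least element gives
`∑_H χ̃(P_{>H}) = -χ̃(P) - 1`, and `χ̃(P) = 0` when `P` has a least element `b`: compare this
identity for `P` and for `P_{>b}`.
-/

open scoped Classical

/-- The reduced Euler characteristic of (the order complex of) a poset `P`.
For the poset `E₊ = E ⊔ {∞}`, one has `μ_{E₊}(H, ∞) = χ̃(E_{>H})` for `H ∈ E`
(Philip Hall's theorem), which is the form used below. -/
noncomputable def reducedEuler (P : Type*) [Preorder P] : ℚ :=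
  -1 + ∑ᶠ d : ℕ, (-1 : ℚ) ^ d * (Nat.card { f : Fin (d + 1) → P // StrictMono f } : ℚ)

open Finset

noncomputable def strictChainCount (P : Type*) [Preorder P] (d : ℕ) : ℕ :=
  Nat.card { f : Fin d → P // StrictMono f }

section Preorder

variable {P : Type*} [Preorder P]

lemma strictChainCount_zero : strictChainCount P 0 = 1 :=
  Nat.card_eq_one_iff_unique.2
    ⟨⟨fun _ _ => Subtype.ext (Subsingleton.elim _ _)⟩, ⟨⟨Fin.elim0, fun i => i.elim0⟩⟩⟩

lemma strictChainCount_eq_zero_of_card_lt [Finite P] {d : ℕ} (h : Nat.card P < d) :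
    strictChainCount P d = 0 :=
  Nat.card_eq_zero.2 <| .inl ⟨fun f => h.not_ge <| by
    simpa using Nat.card_le_card_of_injective _ f.2.injective⟩

lemma strictChainCount_congr {Q : Type*} [Preorder Q] (e : P ≃ Q)
    (he : ∀ a b, e a < e b ↔ a < b) (d : ℕ) : strictChainCount P d = strictChainCount Q d :=
  Nat.card_congr <| (Equiv.arrowCongr (.refl _) e).subtypeEquiv fun f => by
    simp [StrictMono, he]

lemma strictChainCount_succ [Fintype P] (d : ℕ) :
    strictChainCount P (d + 1) = ∑ H : P, strictChainCount { K // H < K } d := by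
  let e : { f : Fin (d + 1) → P // StrictMono f } ≃
      Σ H : P, { g : Fin d → { K // H < K } // StrictMono g } :=
    { toFun f := ⟨f.1 0, fun i => ⟨f.1 i.succ, f.2 i.succ_pos⟩,
        fun _ _ hij => f.2 (Fin.succ_lt_succ_iff.2 hij)⟩
      invFun s := ⟨Fin.cons s.1 fun i => s.2.1 i,
        Fin.strictMono_cons.2 ⟨fun i => (s.2.1 i).2, fun _ _ hij => s.2.2 hij⟩⟩
      left_inv f := Subtype.ext (Fin.cons_self_tail f.1)
      right_inv _ := rfl }
  rw [strictChainCount, Nat.card_congr e, Nat.card_sigma]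
  rfl

/-- The empty chain accounts for the `-1` in `reducedEuler`. -/
lemma reducedEuler_eq_neg_sum [Finite P] {n : ℕ} (hn : Nat.card P ≤ n) :
    reducedEuler P = -∑ d ∈ range (n + 1), (-1 : ℚ) ^ d * strictChainCount P d := by
  show -1 + ∑ᶠ d : ℕ, (-1 : ℚ) ^ d * (strictChainCount P (d + 1) : ℚ) = _
  rw [finsum_eq_sum_of_support_subset (s := range n), sum_range_succ']
  · simp [strictChainCount_zero, pow_succ]
  · refine fun d hd => mem_coe.2 (mem_range.2 (not_le.1 fun h => hd ?_))
    simp [strictChainCount_eq_zero_of_card_lt (P := P) (d := d + 1) (by omega)]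

lemma reducedEuler_congr {Q : Type*} [Preorder Q] (e : P ≃ Q)
    (he : ∀ a b, e a < e b ↔ a < b) : reducedEuler P = reducedEuler Q := by
  simp only [reducedEuler]
  congr! 4 with d
  exact congrArg Nat.cast (strictChainCount_congr e he (d + 1))

lemma sum_reducedEuler_Ioi [Fintype P] :
    ∑ H : P, reducedEuler { K // H < K } = -reducedEuler P - 1 := by
  have hIoi (H : P) : Nat.card { K // H < K } ≤ Nat.card P := Finite.card_subtype_le _
  simp only [reducedEuler_eq_neg_sum (hIoi _),
    reducedEuler_eq_neg_sum (n := Nat.card P + 1) le_self_add, sum_neg_distrib]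
  rw [sum_comm, sum_range_succ' _ (Nat.card P + 1)]
  simp [← mul_sum, strictChainCount_succ, strictChainCount_zero, pow_succ]

end Preorder

section PartialOrder

variable {P : Type*} [PartialOrder P] [Fintype P]

lemma reducedEuler_eq_zero_of_isBot {b : P} (hb : IsBot b) : reducedEuler P = 0 := by
  have hsplit : ∑ H : P, reducedEuler { K // H < K } =
      reducedEuler { K // b < K } + ∑ H : { K // b < K }, reducedEuler { K // H < K } := by
    rw [Fintype.sum_eq_add_sum_subtype_ne _ b]
    congr 1
    refine (Fintype.sum_equiv (Equiv.subtypeEquivRight fun H => ?_) _ _ fun H => ?_).symm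
    · exact (hb H).lt_iff_ne.trans ne_comm
    · exact reducedEuler_congr
        (Equiv.subtypeSubtypeEquivSubtype (p := (b < ·)) (q := (H.1 < ·)) H.2.trans)
        fun _ _ => Iff.rfl
  have hP := sum_reducedEuler_Ioi (P := P)
  have hIoi := sum_reducedEuler_Ioi (P := { K // b < K })
  linarith

lemma sum_ite_le_neg_reducedEuler_Ioi (x : P) :
    ∑ H : P, (if x ≤ H then -reducedEuler { K // H < K } else 0) = 1 := by
  have hIci : ∑ H : { H // x ≤ H }, reducedEuler { K // H < K } = -1 := by
    rw [sum_reducedEuler_Ioi, reducedEuler_eq_zero_of_isBot (b := ⟨x, le_rfl⟩) fun H => H.2]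
    ring
  rw [← sum_filter, sum_subtype _ (p := (x ≤ ·)) (by simp), sum_neg_distrib,
    neg_eq_iff_eq_neg, ← hIci]
  exact Fintype.sum_congr _ _ fun H => reducedEuler_congr
    (Equiv.subtypeSubtypeEquivSubtype (p := (x ≤ ·)) (q := (H.1 < ·))
      fun h => H.2.trans h.le).symm
    fun _ _ => Iff.rfl

end PartialOrder

lemma sum_isCyclic_ite_mem_neg_reducedEuler {G : Type*} [Group G] [Fintype G] (y : G) :
    ∑ H : { H : Subgroup G // IsCyclic H },
      (if y ∈ H.1 then -reducedEuler { K : Subgroup G // IsCyclic K ∧ H.1 < K } else 0) =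
      1 := by
  rw [← sum_ite_le_neg_reducedEuler_Ioi
    (⟨Subgroup.zpowers y, inferInstance⟩ : { H : Subgroup G // IsCyclic H })]
  refine Fintype.sum_congr _ _ fun H => ?_
  have hIoi : reducedEuler { K // H < K } =
      reducedEuler { K : Subgroup G // IsCyclic K ∧ H.1 < K } :=
    reducedEuler_congr (Equiv.subtypeSubtypeEquivSubtypeInter _ (H.1 < ·)) fun _ _ => Iff.rfl
  simp [hIoi, ← Subtype.coe_le_coe, Subgroup.zpowers_le]

lemma div_index_mul_div_card {G : Type*} [Group G] [Fintype G] (H : Subgroup G) (a b : ℚ) :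
    a / H.index * (b / Nat.card H) = a * b / Fintype.card G := by
  rw [div_mul_div_comm, ← Nat.card_eq_fintype_card, ← H.index_mul_card, Nat.cast_mul]

/-- Brauer's explicit form of Artin induction: in the rational
representation ring `ℚ ⊗ R(G)` of complex characters of a finite group `G`,
`𝟙_G = Σ_{H cyclic} (−μ_{E₊}(H,∞)/[G:H]) · Ind_H^G(𝟙_H)`.  Since characters
are determined by their values and `ℚ ⊗ R(G)` embeds into class functions,
this is stated as the equality of character values at every `g ∈ G`, using
the standard formula `Ind_H^G(𝟙_H)(g) = |{x ∈ G : x⁻¹gx ∈ H}| / |H|`. -/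
theorem brauer_explicit_artin_induction {G : Type*} [Group G] [Fintype G] :
    ∀ g : G, (1 : ℚ) =
      ∑ᶠ H : { H : Subgroup G // IsCyclic ↥H },
        (- reducedEuler { K : Subgroup G // IsCyclic ↥K ∧ H.1 < K } /
            ((H.1.index : ℚ))) *
          ((Nat.card { x : G // x⁻¹ * g * x ∈ H.1 } : ℚ) / (Nat.card ↥H.1 : ℚ)) := by
  intro g
  have hG : (Fintype.card G : ℚ) ≠ 0 := Nat.cast_ne_zero.2 Fintype.card_ne_zero
  have hcount (H : Subgroup G) : (Nat.card { x : G // x⁻¹ * g * x ∈ H } : ℚ) =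
      ∑ x : G, if x⁻¹ * g * x ∈ H then 1 else 0 := by
    rw [Nat.card_eq_fintype_card, Fintype.card_subtype, natCast_card_filter]
  rw [finsum_eq_sum_of_fintype]
  simp only [div_index_mul_div_card, hcount, mul_sum, mul_boole, ← sum_div]
  rw [sum_comm, eq_div_iff hG]
  simp [sum_isCyclic_ite_mem_neg_reducedEuler]
end

section
/- Let G be a finite group, D a finite G-category, and for H ≤ G let D^H be the H-fixed subcategory. Then D has series Lefschetz invariant if and only if D^H has series Euler characteristic for every H ≤ G, and in that case Λ_Σ(D) = Σ_{H ∈ [G\All(G)]} χ_Σ(D^H) ε_H, where the sum is over conjugacy class representatives of subgroups and ε_H are the primitive idempotents of the rational Burnside ring Ω(G). -/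
/-! Conjugation by `g` carries the `K`-fixed non-degenerate chains of `D` bijectively onto the
`gKg⁻¹`-fixed ones, so `K ↦ f_{D^K}` is a class function. Hence, once every `f_{D^K}` is a
fraction `p_K / q_K`, the marks of `f_D` are matched by `Σ_H ω_H ⊗ p_H / q_H` with `ω_H` the
indicator of the subgroups `K` having the same series as a chosen representative `H`; conversely a
decomposition of `f_D` read at the mark `m_K` writes `f_{D^K}` as a fraction with denominator
`∏ q_i`. Finally, the value at `-1` of a power series `F` with `F * a = b`, `a(-1) ≠ 0`, does not
depend on the fraction `b / a`, which gives `m_K(Λ_Σ(D)) = χ_Σ(D^K)`. -/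

open CategoryTheory
open scoped Classical

universe u v

/-- The conjugate subgroup `gHg⁻¹`. -/
def conjSub {G : Type*} [Group G] (H : Subgroup G) (g : G) : Subgroup G :=
  H.map (MulAut.conj g).toMonoidHom

/-- A non-degenerate `n`-simplex of the nerve of a category `D`: a chain of
`n` composable non-identity morphisms. -/
structure GChain (D : Type u) [Category.{v} D] (n : ℕ) where
  obj : Fin (n + 1) → D
  hom : ∀ i : Fin n, obj i.castSucc ⟶ obj i.succ
  nondeg : ∀ i : Fin n, ¬ ∃ h : obj i.castSucc = obj i.succ, hom i = eqToHom h

/-- The number of non-degenerate `n`-simplices of the nerve of the `H`-fixed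
subcategory `D^H` of a `G`-category `D` (a category with a `G`-action on
objects and morphisms). -/
noncomputable def fixedChainCount {G : Type*} [Group G]
    (D : Type u) [Category.{v} D] [MulAction G D]
    (mapHom : ∀ (g : G) {x y : D}, (x ⟶ y) → (g • x ⟶ g • y))
    (H : Subgroup G) (n : ℕ) : ℕ :=
  Nat.card { c : GChain D n // ∀ h ∈ H,
    (∀ i : Fin (n + 1), h • c.obj i = c.obj i) ∧
    (∀ i : Fin n, HEq (mapHom h (c.hom i)) (c.hom i)) }

theorem card_fixed_conjSub {G X : Type*} [Group G] [MulAction G X] (K : Subgroup G) (g : G) :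
    Nat.card {x : X // ∀ h ∈ conjSub K g, h • x = x} = Nat.card {x : X // ∀ h ∈ K, h • x = x} := by
  refine Nat.card_congr (Equiv.subtypeEquiv (MulAction.toPerm g⁻¹) fun x => ?_)
  simp only [conjSub, Subgroup.mem_map, MulEquiv.coe_toMonoidHom, MulAut.conj_apply,
    forall_exists_index, and_imp, forall_apply_eq_imp_iff₂, MulAction.toPerm_apply]
  refine forall₂_congr fun k _ => ?_
  rw [mul_smul, mul_smul, smul_eq_iff_eq_inv_smul]

theorem GChain.ext_heq {D : Type u} [Category.{v} D] {n : ℕ} {c₁ c₂ : GChain D n}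
    (hobj : ∀ i, c₁.obj i = c₂.obj i) (hhom : ∀ i, HEq (c₁.hom i) (c₂.hom i)) : c₁ = c₂ := by
  obtain ⟨o₁, h₁, n₁⟩ := c₁
  obtain ⟨o₂, h₂, n₂⟩ := c₂
  obtain rfl : o₁ = o₂ := funext hobj
  obtain rfl : h₁ = h₂ := funext fun i => eq_of_heq (hhom i)
  rfl

section GCategory

variable {G : Type*} [Group G] {D : Type u} [Category.{v} D] [MulAction G D]
  (mapHom : ∀ (g : G) {x y : D}, (x ⟶ y) → (g • x ⟶ g • y))
  (hid : ∀ (g : G) (x : D), mapHom g (𝟙 x) = 𝟙 (g • x))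
  (hone : ∀ {x y : D} (f : x ⟶ y), HEq (mapHom (1 : G) f) f)
  (hmul : ∀ (g g' : G) {x y : D} (f : x ⟶ y),
    HEq (mapHom (g * g') f) (mapHom g (mapHom g' f)))

include hone hmul in
theorem mapHom_inv_mapHom_heq (g : G) {x y : D} (f : x ⟶ y) :
    HEq (mapHom g⁻¹ (mapHom g f)) f := by
  have hinv : HEq (mapHom (g⁻¹ * g) f) (mapHom (1 : G) f) := by rw [inv_mul_cancel]
  exact (hmul g⁻¹ g f).symm.trans (hinv.trans (hone f))

include hid hone hmul in
theorem exists_eq_eqToHom_of_mapHom (g : G) {x y : D} (f : x ⟶ y)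
    (h : ∃ e : g • x = g • y, mapHom g f = eqToHom e) : ∃ e : x = y, f = eqToHom e := by
  obtain ⟨e, hf⟩ := h
  obtain rfl : x = y := MulAction.injective g e
  refine ⟨rfl, ?_⟩
  have hback := mapHom_inv_mapHom_heq mapHom hone hmul g f
  rw [hf, eqToHom_refl, hid, inv_smul_smul] at hback
  exact (eq_of_heq hback).symm

abbrev GChain.mulAction (n : ℕ) : MulAction G (GChain D n) where
  smul g c :=
    { obj := fun i => g • c.obj i
      hom := fun i => mapHom g (c.hom i)
      nondeg := fun i h => c.nondeg i (exists_eq_eqToHom_of_mapHom mapHom hid hone hmul g _ h) }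
  one_smul c := GChain.ext_heq (fun i => one_smul G (c.obj i)) fun i => hone (c.hom i)
  mul_smul g g' c := GChain.ext_heq (fun i => mul_smul g g' (c.obj i)) fun i => hmul g g' (c.hom i)

include hid hone hmul in
theorem fixedChainCount_conjSub (K : Subgroup G) (g : G) (n : ℕ) :
    fixedChainCount D mapHom (conjSub K g) n = fixedChainCount D mapHom K n := by
  let := GChain.mulAction mapHom hid hone hmul n
  have fixed_iff (c : GChain D n) (h : G) :
      ((∀ i, h • c.obj i = c.obj i) ∧ ∀ i, HEq (mapHom h (c.hom i)) (c.hom i)) ↔ h • c = c :=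
    ⟨fun ⟨hobj, hhom⟩ => GChain.ext_heq hobj hhom,
      fun hc => ⟨fun i => congrArg (GChain.obj · i) hc, fun i => congr_arg_heq (GChain.hom · i) hc⟩⟩
  simp only [fixedChainCount, fixed_iff]
  exact card_fixed_conjSub K g

end GCategory

namespace Polynomial

variable {R : Type*}

theorem eval_prod_ne_zero [CommRing R] [IsDomain R] {ι : Type*} [Fintype ι] {q : ι → R[X]} {a : R}
    (hq : ∀ i, (q i).eval a ≠ 0) : (∏ i, q i).eval a ≠ 0 := by
  rw [eval_prod]
  exact Finset.prod_ne_zero_iff.mpr fun i _ => hq i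

theorem eval_div_eq_of_mul_coe_eq [Field R] {F : PowerSeries R} {a b c d : R[X]} {x : R}
    (hab : F * a = b) (hcd : F * c = d) (ha : a.eval x ≠ 0) (hc : c.eval x ≠ 0) :
    b.eval x / a.eval x = d.eval x / c.eval x := by
  have cross : b * c = d * a := by
    rw [← coe_inj, coe_mul, coe_mul, ← hab, ← hcd]
    ring
  rw [div_eq_div_iff ha hc, ← eval_mul, ← eval_mul, cross]

theorem eval_sum_mul_prod_erase_div [Field R] {ι : Type*} [Fintype ι] (ω : ι → R)
    (p q : ι → R[X]) {x : R} (hq : ∀ i, (q i).eval x ≠ 0) :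
    (∑ i, C (ω i) * (p i * ∏ j ∈ Finset.univ.erase i, q j)).eval x / (∏ i, q i).eval x =
      ∑ i, ω i * ((p i).eval x / (q i).eval x) := by
  simp only [eval_finsetSum, eval_mul, eval_C, eval_prod, Finset.sum_div]
  refine Finset.sum_congr rfl fun i _ => ?_
  have hrest : ∏ j ∈ Finset.univ.erase i, (q j).eval x ≠ 0 :=
    Finset.prod_ne_zero_iff.mpr fun j _ => hq j
  rw [← Finset.mul_prod_erase Finset.univ _ (Finset.mem_univ i)]
  field_simp

theorem exists_sum_partial_fractions [CommRing R] {κ : Type*} [Finite κ] [Nonempty κ]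
    (f : κ → PowerSeries R) {a : R}
    (hf : ∀ K, ∃ p q : R[X], q.eval a ≠ 0 ∧ f K * q = p) :
    ∃ (ι : Type) (_ : Fintype ι) (ω : ι → κ → R) (p q : ι → R[X]),
      (∀ i K K', f K = f K' → ω i K = ω i K') ∧ (∀ i, (q i).eval a ≠ 0) ∧
      ∀ K, f K * ((∏ i, q i : R[X]) : PowerSeries R) =
        ((∑ i, C (ω i K) * (p i * ∏ j ∈ Finset.univ.erase i, q j) : R[X]) : PowerSeries R) := by
  choose p q hq hpq using hf
  let e := (Finite.equivFin κ).symm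
  let rep : κ → Fin (Nat.card κ) := fun K => e.symm (Function.invFun f (f K))
  have hrep (K : κ) : f (e (rep K)) = f K := by
    simpa [rep] using Function.invFun_eq ⟨K, rfl⟩
  refine ⟨_, inferInstance, fun i K => if i = rep K then 1 else 0, p ∘ e, q ∘ e,
    fun i K K' h => by simp only [rep, h], fun i => hq _, fun K => ?_⟩
  simp only [apply_ite C, map_one, map_zero, ite_mul, one_mul, zero_mul, Finset.sum_ite_eq',
    Finset.mem_univ, if_true, Function.comp_apply]
  -- the `erase` in the statement uses the classical `DecidableEq` instance, not `instDecidableEqFin`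
  rw [← @Finset.mul_prod_erase _ _ _ (Classical.decEq _) Finset.univ _ _ (Finset.mem_univ (rep K)),
    coe_mul, coe_mul, ← mul_assoc, ← hrep K, hpq]

end Polynomial

/-- `Ω(G)` is identified, via the mark homomorphisms `m_K`, with the ring of
conjugation-invariant functions `Subgroup G → ℚ`; membership of `f_D ∈ Ω(G) ⊗ ℚ[t]_{(t+1)}` means
`f_D = Σ_i ω_i ⊗ p_i/q_i` with `ω_i ∈ Ω(G)`, `q_i(−1) ≠ 0`, read mark-wise; and the formula for
`Λ_Σ(D)` amounts to `m_K(Λ_Σ(D)) = χ_Σ(D^K)` for every `K ≤ G`, since `m_K(ε_H) = 1` if `K` is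
conjugate to `H` and `0` otherwise. -/
theorem series_lefschetz_iff_series_euler {G : Type*} [Group G] [Fintype G]
    (D : Type u) [Category.{v} D] [Fintype D] [∀ x y : D, Fintype (x ⟶ y)]
    [MulAction G D]
    (mapHom : ∀ (g : G) {x y : D}, (x ⟶ y) → (g • x ⟶ g • y))
    (hid : ∀ (g : G) (x : D), mapHom g (𝟙 x) = 𝟙 (g • x))
    (hcomp : ∀ (g : G) {x y z : D} (f : x ⟶ y) (f' : y ⟶ z),
      mapHom g (f ≫ f') = mapHom g f ≫ mapHom g f')
    (hone : ∀ {x y : D} (f : x ⟶ y), HEq (mapHom (1 : G) f) f)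
    (hmul : ∀ (g g' : G) {x y : D} (f : x ⟶ y),
      HEq (mapHom (g * g') f) (mapHom g (mapHom g' f))) :
    -- D has series Lefschetz invariant iff every D^H has series Euler char
    ((∃ (ι : Type) (_ : Fintype ι) (ω : ι → Subgroup G → ℚ)
        (p q : ι → Polynomial ℚ),
        (∀ (i : ι) (K : Subgroup G) (g : G), ω i (conjSub K g) = ω i K) ∧
        (∀ i : ι, (q i).eval (-1) ≠ 0) ∧
        (∀ K : Subgroup G,
          PowerSeries.mk (fun n => (fixedChainCount D mapHom K n : ℚ)) *
              ((∏ i : ι, q i : Polynomial ℚ) : PowerSeries ℚ) =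
            ((∑ i : ι, Polynomial.C (ω i K) * (p i *
                ∏ j ∈ Finset.univ.erase i, q j) : Polynomial ℚ) :
              PowerSeries ℚ))) ↔
      (∀ K : Subgroup G, ∃ p q : Polynomial ℚ, q.eval (-1) ≠ 0 ∧
        PowerSeries.mk (fun n => (fixedChainCount D mapHom K n : ℚ)) *
          (q : PowerSeries ℚ) = (p : PowerSeries ℚ))) ∧
    -- and then m_K(Λ_Σ(D)) = χ_Σ(D^K) for every K, i.e.
    -- Λ_Σ(D) = Σ_{[H]} χ_Σ(D^H) ε_H
    (∀ (ι : Type) (_ : Fintype ι) (ω : ι → Subgroup G → ℚ)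
        (p q : ι → Polynomial ℚ),
        (∀ (i : ι) (K : Subgroup G) (g : G), ω i (conjSub K g) = ω i K) →
        (∀ i : ι, (q i).eval (-1) ≠ 0) →
        (∀ K : Subgroup G,
          PowerSeries.mk (fun n => (fixedChainCount D mapHom K n : ℚ)) *
              ((∏ i : ι, q i : Polynomial ℚ) : PowerSeries ℚ) =
            ((∑ i : ι, Polynomial.C (ω i K) * (p i *
                ∏ j ∈ Finset.univ.erase i, q j) : Polynomial ℚ) :
              PowerSeries ℚ)) →
        ∀ (K : Subgroup G) (pK qK : Polynomial ℚ), qK.eval (-1) ≠ 0 →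
          PowerSeries.mk (fun n => (fixedChainCount D mapHom K n : ℚ)) *
            (qK : PowerSeries ℚ) = (pK : PowerSeries ℚ) →
          (∑ i : ι, ω i K * ((p i).eval (-1) / (q i).eval (-1))) =
            pK.eval (-1) / qK.eval (-1)) := by
  set f : Subgroup G → PowerSeries ℚ :=
    fun K => PowerSeries.mk fun n => (fixedChainCount D mapHom K n : ℚ)
  refine ⟨⟨?_, fun hf => ?_⟩, ?_⟩
  · rintro ⟨ι, _, ω, p, q, -, hq, hf⟩ K
    exact ⟨_, _, Polynomial.eval_prod_ne_zero hq, hf K⟩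
  · obtain ⟨ι, _, ω, p, q, hω, hq, hf⟩ := Polynomial.exists_sum_partial_fractions f hf
    have f_conjSub (K : Subgroup G) (g : G) : f (conjSub K g) = f K := by
      simp only [f, fixedChainCount_conjSub mapHom hid hone hmul]
    exact ⟨ι, _, ω, p, q, fun i K g => hω i _ _ (f_conjSub K g), hq, hf⟩
  · intro ι _ ω p q _ hq hf K pK qK hqK hfK
    rw [← Polynomial.eval_sum_mul_prod_erase_div (ω · K) p q hq]
    exact Polynomial.eval_div_eq_of_mul_coe_eq (hf K) hfK (Polynomial.eval_prod_ne_zero hq) hqK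
end
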